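/- arXiv:1106.5914 — 5 statements merged into one kernel-verified Lean document; each statement's English description precedes it below -/
import Mathlib

section
/- As |z| → ∞ in ℂ, the principal argument satisfies arg(z − 1) = arg(z) + sin(arg z)/|z| + O(|z|^{−2}); precisely, the function z ↦ arg(z − 1) − arg(z) − sin(arg z)/|z| is big-O of z ↦ |z|^{−2} along the cobounded filter of ℂ. -/
/-!
Writing `z - 1 = z (1 - z⁻¹)`, the difference `arg (z - 1) - arg z` is `arg (1 - z⁻¹)`: no branch
cut is crossed because `z - 1` and `z` have the same imaginary part. Since `arg = im ∘ log` and
`log (1 - w) = -w + O(w²)`, we get `arg (1 - w) = -im w + O(‖w‖²)`, and for `w = z⁻¹` the linear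
term is `-im z⁻¹ = im z / ‖z‖² = sin (arg z) / ‖z‖`.
-/

open Asymptotics Filter Topology
open scoped Real

namespace Complex

theorem arg_sub_arg_mem_Ioc_of_im_eq_of_re_le {x y : ℂ} (him : x.im = y.im) (hre : x.re ≤ y.re) :
    arg x - arg y ∈ Set.Ioc (-π) π := by
  have hx := arg_mem_Ioc x
  have hy := arg_mem_Ioc y
  rcases lt_trichotomy y.im 0 with hneg | hzero | hpos
  · have := arg_neg_iff.2 (him ▸ hneg)
    have := arg_neg_iff.2 hneg
    constructor <;> linarith [hx.1, hy.1]
  · have hx0 : 0 ≤ arg x := arg_nonneg_iff.2 (him ▸ hzero).ge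
    have hy0 : 0 ≤ arg y := arg_nonneg_iff.2 hzero.ge
    refine ⟨?_, by linarith [hx.2]⟩
    rcases le_or_gt 0 y.re with hyre | hyre
    · rw [arg_eq_zero_iff.2 ⟨hyre, hzero⟩]
      linarith [Real.pi_pos]
    · rw [arg_eq_pi_iff.2 ⟨hre.trans_lt hyre, him ▸ hzero⟩, arg_eq_pi_iff.2 ⟨hyre, hzero⟩]
      linarith [Real.pi_pos]
  · have := arg_nonneg_iff.2 (him ▸ hpos).le
    have := arg_nonneg_iff.2 hpos.le
    have := arg_lt_pi_iff.2 (Or.inr hpos.ne')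
    constructor <;> linarith [hx.2]

theorem arg_div_eq_sub_arg_iff {x y : ℂ} (hx : x ≠ 0) (hy : y ≠ 0) :
    arg (x / y) = arg x - arg y ↔ arg x - arg y ∈ Set.Ioc (-π) π := by
  rw [← arg_coe_angle_toReal_eq_arg, arg_div_coe_angle hx hy, ← Real.Angle.coe_sub,
    Real.Angle.toReal_coe_eq_self_iff_mem_Ioc]

theorem arg_sub_one_sub_arg {z : ℂ} (hz : z ≠ 0) : arg (z - 1) - arg z = arg (1 - z⁻¹) := by
  rcases eq_or_ne z 1 with rfl | hz1
  · simp
  rw [show 1 - z⁻¹ = (z - 1) / z by field_simp]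
  exact ((arg_div_eq_sub_arg_iff (sub_ne_zero.2 hz1) hz).2
    (arg_sub_arg_mem_Ioc_of_im_eq_of_re_le (by simp) (by simp))).symm

theorem arg_one_sub_add_im_isBigO :
    (fun w : ℂ => arg (1 - w) + w.im) =O[𝓝 0] fun w => w ^ 2 := by
  have hlog : (fun w : ℂ => log (1 - w) + w) =O[𝓝 0] fun w => w ^ 2 := by
    simpa [Function.comp_def, sub_eq_add_neg] using
      log_sub_self_isBigO.comp_tendsto (continuous_neg.tendsto' (0 : ℂ) 0 neg_zero)
  refine (isBigO_of_le _ fun w => ?_).trans hlog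
  rw [← log_im, ← add_im, Real.norm_eq_abs]
  exact abs_im_le_norm _

end Complex

/-- As `|z| → ∞`, `arg(z − 1) = arg(z) + sin(arg z)/|z| + O(|z|⁻²)`. -/
theorem arg_sub_one_asymptotics :
    (fun z : ℂ =>
        Complex.arg (z - 1) - Complex.arg z - Real.sin (Complex.arg z) / ‖z‖)
      =O[Bornology.cobounded ℂ] fun z : ℂ => ((‖z‖) ^ 2)⁻¹ := by
  have key := Complex.arg_one_sub_add_im_isBigO.comp_tendsto tendsto_inv₀_cobounded
  refine key.norm_right.congr' ?_ (.of_forall fun z => by simp)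
  filter_upwards [Bornology.eventually_ne_cobounded 0] with z hz
  rw [Function.comp_apply, Complex.arg_sub_one_sub_arg hz, Complex.sin_arg, Complex.inv_im,
    ← Complex.sq_norm]
  field_simp
  ring
end

section
/- Fix h ∈ ℝ and let R_h : ℂ → ℂ be the skew rotation with center 0, R_h(z) = z·exp(i·h/|z|) for z ≠ 0. Then R_h is a perturbed skew rotation in the inverse polar coordinates centered at 1; precisely, along the cobounded filter of ℂ: (i) the function z ↦ arg((R_h(z) − 1)/(z − 1)) − h·|z − 1|^{−1} is big-O of z ↦ |z|^{−2}, and (ii) the function z ↦ |R_h(z) − 1|^{−1} − |z − 1|^{−1} is big-O of z ↦ |z|^{−3}. -/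
/-!
Write `θ = h / ‖z‖` and `e = exp(-iθ)`, so that `R_h z - 1 = e⁻¹ (z - e)` with `‖e - 1‖ ≤ |θ|`.
Radially, `‖R_h z - 1‖ = ‖z - e‖`, and two inverse distances from `z` to points of norm at most
`1` differ by `O(‖e - 1‖ / ‖z‖²) = O(‖z‖⁻³)`. Angularly, `(R_h z - 1) / (z - 1) = e⁻¹ (1 + w)`
with `w = (1 - e) / (z - 1) = O(‖z‖⁻²)`; for large `z` the arguments add, so the angle is
`θ + arg (1 + w)`, where `arg (1 + w) = O(w)` and `θ - h / ‖z - 1‖ = h (1/‖z‖ - 1/‖z - 1‖)`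
is again a difference of inverse distances.
-/

open Asymptotics

/-- The skew rotation with center `F` and angular speed `h`:
`z ↦ F + (z − F)·exp(i·h/|z − F|)` for `z ≠ F`, and `F ↦ F`. -/
noncomputable def skewRot (F : ℂ) (h : ℝ) (z : ℂ) : ℂ :=
  if z = F then F
  else F + (z - F) * Complex.exp (Complex.I * ((h / ‖z - F‖ : ℝ) : ℂ))

open Filter Topology Bornology Complex Real

namespace Complex

lemma arg_exp_I_mul_one_add {θ : ℝ} {w : ℂ} (hθ : |θ| < π / 2) (hw : ‖w‖ < 1) :
    arg (exp (I * θ) * (1 + w)) = θ + arg (1 + w) := by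
  have hw₀ : 1 + w ≠ 0 := fun h0 => by
    simp [eq_neg_of_add_eq_zero_right h0] at hw
  obtain ⟨hθl, hθr⟩ := abs_lt.mp hθ
  obtain ⟨hwl, hwr⟩ := arg_one_add_mem_Ioo hw
  have harg_exp : arg (exp (I * θ)) = θ := by
    rw [mul_comm, arg_exp_mul_I, toIocMod_eq_self]
    constructor <;> linarith [pi_pos]
  rw [(arg_mul_eq_add_arg_iff (exp_ne_zero _) hw₀).mpr
    (by rw [harg_exp]; constructor <;> linarith), harg_exp]

lemma isBigO_arg_one_add : (fun w : ℂ => arg (1 + w)) =O[𝓝 0] id := by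
  refine IsBigO.of_bound (3 / 2) ?_
  filter_upwards [Metric.closedBall_mem_nhds (0 : ℂ) (by norm_num : (0 : ℝ) < 1 / 2)] with w hw
  rw [mem_closedBall_zero_iff] at hw
  calc ‖arg (1 + w)‖ = |(log (1 + w)).im| := by rw [log_im, Real.norm_eq_abs]
    _ ≤ ‖log (1 + w)‖ := abs_im_le_norm _
    _ ≤ 3 / 2 * ‖w‖ := norm_log_one_add_half_le_self hw

lemma exp_I_mul_mul_sub_one (θ : ℝ) (z : ℂ) :
    exp (I * θ) * z - 1 = exp (I * θ) * (z - exp (I * ↑(-θ))) := by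
  rw [mul_sub, ← exp_add, ofReal_neg, mul_neg, add_neg_cancel, exp_zero]

lemma norm_exp_I_mul_mul_sub_one (θ : ℝ) (z : ℂ) :
    ‖exp (I * θ) * z - 1‖ = ‖z - exp (I * ↑(-θ))‖ := by
  rw [exp_I_mul_mul_sub_one, norm_mul, norm_exp_I_mul_ofReal, one_mul]

lemma exp_I_mul_mul_sub_one_div {z : ℂ} (hz : z ≠ 1) (θ : ℝ) :
    (exp (I * θ) * z - 1) / (z - 1) = exp (I * θ) * (1 + (1 - exp (I * ↑(-θ))) / (z - 1)) := by
  rw [exp_I_mul_mul_sub_one, mul_div_assoc, one_add_div (sub_ne_zero.mpr hz)]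
  ring

end Complex

section InverseDistance

variable {E : Type*} [SeminormedAddCommGroup E]

lemma abs_inv_norm_sub_sub_inv_norm_sub_le {x c d : E} (hc : ‖c‖ ≤ ‖x‖ / 2) (hd : ‖d‖ ≤ ‖x‖ / 2) :
    |‖x - c‖⁻¹ - ‖x - d‖⁻¹| ≤ 4 * ‖c - d‖ / ‖x‖ ^ 2 := by
  rcases (norm_nonneg x).eq_or_lt with hx | hx
  · have hxc : ‖x - c‖ = 0 := by linarith [norm_sub_le x c, norm_nonneg (x - c)]
    have hxd : ‖x - d‖ = 0 := by linarith [norm_sub_le x d, norm_nonneg (x - d)]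
    simp only [hxc, hxd, inv_zero, sub_zero, abs_zero]
    positivity
  have hxc : ‖x‖ / 2 ≤ ‖x - c‖ := by linarith [norm_sub_norm_le x c]
  have hxd : ‖x‖ / 2 ≤ ‖x - d‖ := by linarith [norm_sub_norm_le x d]
  have hxc₀ : 0 < ‖x - c‖ := by linarith
  have hxd₀ : 0 < ‖x - d‖ := by linarith
  have hcd : |‖x - d‖ - ‖x - c‖| ≤ ‖c - d‖ := by
    simpa using abs_norm_sub_norm_le (x - d) (x - c)
  rw [inv_sub_inv hxc₀.ne' hxd₀.ne', abs_div, abs_of_pos (mul_pos hxc₀ hxd₀)]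
  calc |‖x - d‖ - ‖x - c‖| / (‖x - c‖ * ‖x - d‖) ≤ ‖c - d‖ / (‖x‖ / 2 * (‖x‖ / 2)) := by
        gcongr
    _ = 4 * ‖c - d‖ / ‖x‖ ^ 2 := by field_simp; ring

lemma inv_norm_sub_sub_inv_norm_sub_isBigO {C : ℝ} {c d : E → E} (hc : ∀ x, ‖c x‖ ≤ C)
    (hd : ∀ x, ‖d x‖ ≤ C) :
    (fun x => ‖x - c x‖⁻¹ - ‖x - d x‖⁻¹) =O[cobounded E] fun x => ‖c x - d x‖ / ‖x‖ ^ 2 := by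
  refine IsBigO.of_bound 4 ?_
  filter_upwards [eventually_cobounded_le_norm (2 * C)] with x hx
  rw [Real.norm_eq_abs, Real.norm_of_nonneg (by positivity), mul_div_assoc']
  exact abs_inv_norm_sub_sub_inv_norm_sub_le (by linarith [hc x]) (by linarith [hd x])

end InverseDistance

lemma skewRot_zero_of_ne (h : ℝ) {z : ℂ} (hz : z ≠ 0) :
    skewRot 0 h z = exp (I * ↑(h / ‖z‖)) * z := by
  simp [skewRot, hz, mul_comm]

lemma norm_exp_I_mul_neg_div_norm_sub_one_le (h : ℝ) (z : ℂ) :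
    ‖exp (I * ↑(-(h / ‖z‖))) - 1‖ ≤ |h| / ‖z‖ := by
  simpa [abs_div] using norm_exp_I_mul_ofReal_sub_one_le (x := -(h / ‖z‖))

theorem skewRot_zero_inv_norm_sub_one_isBigO (h : ℝ) :
    (fun z : ℂ => ‖skewRot 0 h z - 1‖⁻¹ - ‖z - 1‖⁻¹) =O[cobounded ℂ] fun z => (‖z‖ ^ 3)⁻¹ := by
  have hrot : (fun z : ℂ => ‖exp (I * ↑(-(h / ‖z‖))) - 1‖ / ‖z‖ ^ 2)
      =O[cobounded ℂ] fun z => (‖z‖ ^ 3)⁻¹ := by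
    refine IsBigO.of_bound |h| (Eventually.of_forall fun z => ?_)
    rw [Real.norm_of_nonneg (by positivity), Real.norm_of_nonneg (by positivity)]
    calc ‖exp (I * ↑(-(h / ‖z‖))) - 1‖ / ‖z‖ ^ 2 ≤ |h| / ‖z‖ / ‖z‖ ^ 2 := by
          gcongr
          exact norm_exp_I_mul_neg_div_norm_sub_one_le h z
      _ = |h| * (‖z‖ ^ 3)⁻¹ := by ring
  refine ((inv_norm_sub_sub_inv_norm_sub_isBigO (C := 1)
    (c := fun z => exp (I * ↑(-(h / ‖z‖)))) (d := fun _ => 1)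
    (fun _ => (norm_exp_I_mul_ofReal _).le) (fun _ => norm_one.le)).trans hrot).congr' ?_
    EventuallyEq.rfl
  filter_upwards [eventually_ne_cobounded 0] with z hz
  rw [skewRot_zero_of_ne h hz, norm_exp_I_mul_mul_sub_one]

theorem skewRot_zero_arg_div_sub_isBigO (h : ℝ) :
    (fun z : ℂ => arg ((skewRot 0 h z - 1) / (z - 1)) - h * ‖z - 1‖⁻¹)
      =O[cobounded ℂ] fun z => (‖z‖ ^ 2)⁻¹ := by
  set w : ℂ → ℂ := fun z => (1 - exp (I * ↑(-(h / ‖z‖)))) / (z - 1) with hw_def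
  have hw : w =O[cobounded ℂ] fun z => (‖z‖ ^ 2)⁻¹ := by
    refine IsBigO.of_bound (2 * |h|) ?_
    filter_upwards [eventually_cobounded_le_norm 2] with z hz
    have hz1 : ‖z‖ / 2 ≤ ‖z - 1‖ := by linarith [norm_sub_norm_le z 1, norm_one (α := ℂ)]
    rw [Real.norm_of_nonneg (by positivity), hw_def, norm_div, norm_sub_rev]
    calc ‖exp (I * ↑(-(h / ‖z‖))) - 1‖ / ‖z - 1‖ ≤ |h| / ‖z‖ / (‖z‖ / 2) := by
          gcongr
          exact norm_exp_I_mul_neg_div_norm_sub_one_le h z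
      _ = 2 * |h| * (‖z‖ ^ 2)⁻¹ := by field_simp
  have hw_lim : Tendsto w (cobounded ℂ) (𝓝 0) := hw.trans_tendsto
    ((tendsto_pow_atTop two_ne_zero).comp tendsto_norm_cobounded_atTop).inv_tendsto_atTop
  have hsplit : (fun z : ℂ => arg ((skewRot 0 h z - 1) / (z - 1)) - h * ‖z - 1‖⁻¹)
      =ᶠ[cobounded ℂ] fun z => h * (‖z - 0‖⁻¹ - ‖z - 1‖⁻¹) + arg (1 + w z) := by
    filter_upwards [eventually_cobounded_le_norm (|h| + 2),
      hw_lim.eventually (Metric.ball_mem_nhds 0 one_pos)] with z hz hwz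
    have hz0 : z ≠ 0 := norm_pos_iff.mp (by linarith [abs_nonneg h])
    have hz1 : z ≠ 1 := fun h1 => by norm_num [h1] at hz; linarith [abs_nonneg h]
    have hθ : |h / ‖z‖| < π / 2 := by
      rw [abs_div, abs_norm, div_lt_iff₀ (by linarith [abs_nonneg h])]
      nlinarith [pi_gt_three, abs_nonneg h]
    rw [skewRot_zero_of_ne h hz0, exp_I_mul_mul_sub_one_div hz1,
      arg_exp_I_mul_one_add hθ (mem_ball_zero_iff.mp hwz), sub_zero]
    ring
  have hdist : (fun z : ℂ => h * (‖z - 0‖⁻¹ - ‖z - 1‖⁻¹)) =O[cobounded ℂ] fun z => (‖z‖ ^ 2)⁻¹ := by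
    simpa [div_eq_inv_mul] using (inv_norm_sub_sub_inv_norm_sub_isBigO (C := 1)
      (c := fun _ => (0 : ℂ)) (d := fun _ => 1) (by simp) (by simp)).const_mul_left h
  exact (hdist.add ((isBigO_arg_one_add.comp_tendsto hw_lim).trans hw)).congr' hsplit.symm
    EventuallyEq.rfl

/-- The skew rotation `R_h` with center `0` is a perturbed skew rotation in the
inverse polar coordinates centered at `1`: the angular increment is
`h/|z − 1| + O(|z|⁻²)` and the radial increment is `O(|z|⁻³)`. -/
theorem skewRot_is_perturbed_in_shifted_coords (h : ℝ) :
    ((fun z : ℂ =>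
        Complex.arg ((skewRot 0 h z - 1) / (z - 1)) - h * ‖z - 1‖⁻¹)
      =O[Bornology.cobounded ℂ] fun z : ℂ => (‖z‖ ^ 2)⁻¹) ∧
    ((fun z : ℂ => ‖skewRot 0 h z - 1‖⁻¹ - ‖z - 1‖⁻¹)
      =O[Bornology.cobounded ℂ] fun z : ℂ => (‖z‖ ^ 3)⁻¹) :=
  ⟨skewRot_zero_arg_div_sub_isBigO h, skewRot_zero_inv_norm_sub_one_isBigO h⟩
end

section
/- Let T_1, T_2 : ℝ × ℝ → ℝ × ℝ be 2π-equivariant maps that are perturbed skew rotations in the coordinates (r, φ) with angular coefficients h_1 and h_2 respectively. Then the composition T = T_2 ∘ T_1 is a perturbed skew rotation in the coordinates (r, φ) with angular coefficient h_1 + h_2: there exist C' > 0 and ε' > 0 such that, writing T(r, φ) = (R(r,φ), Φ(r,φ)), for all 0 < r < ε' and all φ ∈ ℝ one has |Φ(r,φ) − φ − (h_1 + h_2)·r| ≤ C'·r² and |R(r,φ) − r| ≤ C'·r³. -/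
/-!
Write `T₁(r, φ) = (R₁, Φ₁)`. For small `r` the radial error `C₁ r³` is less than `r`, so
`0 < R₁ < 2r` and the estimates of `T₂` apply at `(R₁, Φ₁)` with `R₁² ≤ 4r²`, `R₁³ ≤ 8r³`.
The angular error of the composition splits as
`(Φ₂ - Φ₁ - h₂ R₁) + (Φ₁ - φ - h₁ r) + h₂ (R₁ - r)`, whose last term is `O(r³)`.
-/

/-- A map `T(r, φ) = (R(r,φ), Φ(r,φ))` is 2π-equivariant if `R(r, φ + 2π) = R(r, φ)`
and `Φ(r, φ + 2π) = Φ(r, φ) + 2π`. -/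
def TwoPiEquivariant (T : ℝ × ℝ → ℝ × ℝ) : Prop :=
  ∀ r φ : ℝ, T (r, φ + 2 * Real.pi) = ((T (r, φ)).1, (T (r, φ)).2 + 2 * Real.pi)

/-- A 2π-equivariant map `T(r,φ) = (R(r,φ), Φ(r,φ))` is a perturbed skew rotation in
the coordinates `(r, φ)` with angular coefficient `h` if there are `C > 0` and `ε > 0`
such that `|Φ(r,φ) − φ − h·r| ≤ C·r²` and `|R(r,φ) − r| ≤ C·r³` for all `0 < r < ε`. -/
def IsPerturbedSkewRotation (T : ℝ × ℝ → ℝ × ℝ) (h : ℝ) : Prop :=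
  ∃ C > (0 : ℝ), ∃ ε > (0 : ℝ), ∀ r φ : ℝ, 0 < r → r < ε →
    |(T (r, φ)).2 - φ - h * r| ≤ C * r ^ 2 ∧ |(T (r, φ)).1 - r| ≤ C * r ^ 3

open Set

theorem abs_angle_comp_sub_le {r R Φ₁ Φ₂ φ h₁ h₂ C₁ C₂ : ℝ} (hC₁ : 0 ≤ C₁) (hC₂ : 0 ≤ C₂)
    (hR₀ : 0 ≤ R) (hR : R ≤ 2 * r) (hr : r ≤ 1) (hRr : |R - r| ≤ C₁ * r ^ 3)
    (hΦ₁ : |Φ₁ - φ - h₁ * r| ≤ C₁ * r ^ 2) (hΦ₂ : |Φ₂ - Φ₁ - h₂ * R| ≤ C₂ * R ^ 2) :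
    |Φ₂ - φ - (h₁ + h₂) * r| ≤ (4 * C₂ + (1 + |h₂|) * C₁) * r ^ 2 := by
  have hr₀ : 0 ≤ r := by linarith
  have hr_cube : r ^ 3 ≤ r ^ 2 := pow_le_pow_of_le_one hr₀ hr (by norm_num)
  calc |Φ₂ - φ - (h₁ + h₂) * r|
      = |(Φ₂ - Φ₁ - h₂ * R) + (Φ₁ - φ - h₁ * r) + h₂ * (R - r)| := by ring_nf
    _ ≤ |Φ₂ - Φ₁ - h₂ * R| + |Φ₁ - φ - h₁ * r| + |h₂| * |R - r| := by
        rw [← abs_mul]; exact abs_add_three _ _ _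
    _ ≤ C₂ * R ^ 2 + C₁ * r ^ 2 + |h₂| * (C₁ * r ^ 3) := by gcongr
    _ ≤ C₂ * (2 * r) ^ 2 + C₁ * r ^ 2 + |h₂| * (C₁ * r ^ 2) := by gcongr
    _ = (4 * C₂ + (1 + |h₂|) * C₁) * r ^ 2 := by ring

theorem abs_radius_comp_sub_le {r R₁ R₂ C₁ C₂ : ℝ} (hC₂ : 0 ≤ C₂) (hR₀ : 0 ≤ R₁)
    (hR : R₁ ≤ 2 * r) (hR₁ : |R₁ - r| ≤ C₁ * r ^ 3) (hR₂ : |R₂ - R₁| ≤ C₂ * R₁ ^ 3) :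
    |R₂ - r| ≤ (8 * C₂ + C₁) * r ^ 3 := by
  calc |R₂ - r| = |(R₂ - R₁) + (R₁ - r)| := by ring_nf
    _ ≤ |R₂ - R₁| + |R₁ - r| := abs_add_le _ _
    _ ≤ C₂ * R₁ ^ 3 + C₁ * r ^ 3 := add_le_add hR₂ hR₁
    _ ≤ C₂ * (2 * r) ^ 3 + C₁ * r ^ 3 := by gcongr
    _ = (8 * C₂ + C₁) * r ^ 3 := by ring

theorem mem_Ioo_zero_two_mul_of_abs_sub_le {r R C : ℝ} (hr : 0 < r) (hCr : C * r ^ 2 < 1)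
    (hR : |R - r| ≤ C * r ^ 3) : R ∈ Ioo 0 (2 * r) := by
  have hlt : |R - r| < r :=
    hR.trans_lt (by nlinarith [show C * r ^ 3 = C * r ^ 2 * r by ring])
  obtain ⟨h₁, h₂⟩ := abs_sub_lt_iff.mp hlt
  constructor <;> linarith

theorem IsPerturbedSkewRotation.exists_bounds_le_one {T : ℝ × ℝ → ℝ × ℝ} {h : ℝ}
    (hT : IsPerturbedSkewRotation T h) :
    ∃ C > (0 : ℝ), ∃ ε > (0 : ℝ), ε ≤ 1 ∧ ∀ r φ : ℝ, 0 < r → r < ε →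
      |(T (r, φ)).2 - φ - h * r| ≤ C * r ^ 2 ∧ |(T (r, φ)).1 - r| ≤ C * r ^ 3 ∧
        (T (r, φ)).1 ∈ Ioo 0 (2 * r) := by
  obtain ⟨C, hC, ε, hε, H⟩ := hT
  refine ⟨C, hC, min ε (min 1 (1 / C)), by positivity,
    (min_le_right _ _).trans (min_le_left _ _), fun r φ hr hrε => ?_⟩
  obtain ⟨hΦ, hR⟩ := H r φ hr (hrε.trans_le (min_le_left _ _))
  have hr₁ : r < 1 := hrε.trans_le ((min_le_right _ _).trans (min_le_left _ _))
  have hCr : C * r < 1 :=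
    (lt_div_iff₀' hC).mp (hrε.trans_le ((min_le_right _ _).trans (min_le_right _ _)))
  have hCr₂ : C * r ^ 2 < 1 := by nlinarith [show C * r ^ 2 = C * r * r by ring]
  exact ⟨hΦ, hR, mem_Ioo_zero_two_mul_of_abs_sub_le hr hCr₂ hR⟩

theorem comp_perturbedSkewRotation_general (T₁ T₂ : ℝ × ℝ → ℝ × ℝ) (h₁ h₂ : ℝ)
    (hp₁ : IsPerturbedSkewRotation T₁ h₁) (hp₂ : IsPerturbedSkewRotation T₂ h₂) :
    ∃ C' > (0 : ℝ), ∃ ε' > (0 : ℝ), ∀ r φ : ℝ, 0 < r → r < ε' →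
      |((T₂ ∘ T₁) (r, φ)).2 - φ - (h₁ + h₂) * r| ≤ C' * r ^ 2 ∧
      |((T₂ ∘ T₁) (r, φ)).1 - r| ≤ C' * r ^ 3 := by
  obtain ⟨C₁, hC₁, ε₁, hε₁, hε₁_le, H₁⟩ := hp₁.exists_bounds_le_one
  obtain ⟨C₂, hC₂, ε₂, hε₂, H₂⟩ := hp₂
  refine ⟨8 * C₂ + (1 + |h₂|) * C₁, by positivity, min ε₁ (ε₂ / 2), by positivity,
    fun r φ hr hrε => ?_⟩
  have hr₁ : r < ε₁ := hrε.trans_le (min_le_left _ _)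
  have hr₂ : r < ε₂ / 2 := hrε.trans_le (min_le_right _ _)
  obtain ⟨hΦ₁, hR₁, hR_pos, hR_lt⟩ := H₁ r φ hr hr₁
  obtain ⟨hΦ₂, hR₂⟩ := H₂ _ (T₁ (r, φ)).2 hR_pos (by linarith)
  refine ⟨(abs_angle_comp_sub_le hC₁.le hC₂.le hR_pos.le hR_lt.le (by linarith) hR₁ hΦ₁
    hΦ₂).trans ?_, (abs_radius_comp_sub_le hC₂.le hR_pos.le hR_lt.le hR₁ hR₂).trans ?_⟩
  · gcongr; linarith
  · gcongr; nlinarith [abs_nonneg h₂]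

/-- The composition of two 2π-equivariant perturbed skew rotations with angular
coefficients `h₁` and `h₂` is a perturbed skew rotation with coefficient `h₁ + h₂`. -/
theorem comp_perturbedSkewRotation (T₁ T₂ : ℝ × ℝ → ℝ × ℝ) (h₁ h₂ : ℝ)
    (he₁ : TwoPiEquivariant T₁) (he₂ : TwoPiEquivariant T₂)
    (hp₁ : IsPerturbedSkewRotation T₁ h₁) (hp₂ : IsPerturbedSkewRotation T₂ h₂) :
    ∃ C' > (0 : ℝ), ∃ ε' > (0 : ℝ), ∀ r φ : ℝ, 0 < r → r < ε' →
      |((T₂ ∘ T₁) (r, φ)).2 - φ - (h₁ + h₂) * r| ≤ C' * r ^ 2 ∧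
      |((T₂ ∘ T₁) (r, φ)).1 - r| ≤ C' * r ^ 3 :=
  comp_perturbedSkewRotation_general T₁ T₂ h₁ h₂ hp₁ hp₂
end

section
/- Let ρ, θ : U → ℝ be a concordant coordinate change from the coordinates (r, φ), defined on an open set U ⊆ ℝ² containing {0} × ℝ. Let T be a 2π-equivariant map that is a perturbed skew rotation in the coordinates (r, φ) with angular coefficient h. Then T is also a perturbed skew rotation with the same coefficient h in the coordinates (ρ, θ): there exist C' > 0 and ε' > 0 such that, writing (r_1, φ_1) = T(r, φ), for all 0 < r < ε' and all φ ∈ ℝ one has |ρ(r_1, φ_1) − ρ(r, φ)| ≤ C'·ρ(r, φ)³ and |θ(r_1, φ_1) − θ(r, φ) − h·ρ(r, φ)| ≤ C'·ρ(r, φ)². -/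
/-!
Periodicity in `φ` turns the information along the axis `r = 0` into uniform information on a
strip `|r| ≤ a`: there `ρ` and `ϑ = θ - φ` are `C²` with Lipschitz derivatives up to order two.
Taylor expansion at the axis gives `ρ = r + O(r²)`, `∂_φ ρ = O(r²)` and `∂_φ ϑ = O(r)`.
Moving from `(r, φ)` to `T (r, φ) = (r + O(r³), φ + O(r))` first in `r`, then in `φ`, changes
`ρ` by `O(r³)` and `ϑ` by `O(r²)`; since `ρ ~ r`, these bounds can be written in terms of `ρ`.
-/

open Set Filter Topology Function Asymptotics

section Taylor

variable {E F : Type*} [NormedAddCommGroup E] [NormedSpace ℝ E]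
  [NormedAddCommGroup F] [NormedSpace ℝ F]

theorem Convex.norm_image_sub_sub_fderiv_le {s : Set E} (hs : Convex ℝ s) {f : E → F} {M : ℝ}
    {x y : E} (hf : ∀ z ∈ s, DifferentiableAt ℝ f z)
    (hf' : ∀ z ∈ s, ∀ w ∈ s, ‖fderiv ℝ f w - fderiv ℝ f z‖ ≤ M * ‖w - z‖)
    (hx : x ∈ s) (hy : y ∈ s) :
    ‖f y - f x - fderiv ℝ f x (y - x)‖ ≤ M * ‖y - x‖ ^ 2 := by
  have hseg : segment ℝ x y ⊆ s := hs.segment_subset hx hy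
  rcases eq_or_ne y x with rfl | hxy
  · simp
  have hM : 0 ≤ M := nonneg_of_mul_nonneg_left ((norm_nonneg _).trans (hf' x hx y hy))
    (norm_pos_iff.2 (sub_ne_zero.2 hxy))
  have hlip : ∀ z ∈ segment ℝ x y, ‖fderiv ℝ f z - fderiv ℝ f x‖ ≤ M * ‖y - x‖ := fun z hz =>
    (hf' x hx z (hseg hz)).trans (by gcongr; exact norm_sub_le_of_mem_segment hz)
  calc ‖f y - f x - fderiv ℝ f x (y - x)‖ ≤ M * ‖y - x‖ * ‖y - x‖ :=
        (convex_segment x y).norm_image_sub_le_of_norm_fderiv_le' (fun z hz => hf z (hseg hz))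
          hlip (left_mem_segment ℝ x y) (right_mem_segment ℝ x y)
    _ = M * ‖y - x‖ ^ 2 := by ring

end Taylor

section Vertical

variable {F : Type*} [NormedAddCommGroup F] [NormedSpace ℝ F] {g : ℝ × ℝ → F}

theorem HasFDerivAt.hasDerivAt_vertical {g' : ℝ × ℝ →L[ℝ] F} {s ψ : ℝ}
    (hg : HasFDerivAt g g' (s, ψ)) : HasDerivAt (fun t => g (s, t)) (g' (0, 1)) ψ :=
  hg.comp_hasDerivAt ψ ((hasDerivAt_const ψ s).prodMk (hasDerivAt_id ψ))

theorem HasFDerivAt.apply_vertical_eq_zero {g' : ℝ × ℝ →L[ℝ] F} {s ψ : ℝ} {c : F}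
    (hg : HasFDerivAt g g' (s, ψ)) (hconst : ∀ t, g (s, t) = c) : g' (0, 1) = 0 :=
  hg.hasDerivAt_vertical.unique (by simpa only [hconst] using hasDerivAt_const ψ c)

theorem norm_sub_le_of_norm_fderiv_vertical_le {s B : ℝ} (hg : ∀ t, DifferentiableAt ℝ g (s, t))
    (hB : ∀ t, ‖fderiv ℝ g (s, t) (0, 1)‖ ≤ B) (φ ψ : ℝ) :
    ‖g (s, φ) - g (s, ψ)‖ ≤ B * |φ - ψ| :=
  convex_univ.norm_image_sub_le_of_norm_hasDerivWithin_le
    (fun t _ => (hg t).hasFDerivAt.hasDerivAt_vertical.hasDerivWithinAt) (fun t _ => hB t)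
    (mem_univ ψ) (mem_univ φ)

theorem fderiv_sub_snd_apply_vertical {θ : ℝ × ℝ → ℝ} {z : ℝ × ℝ}
    (hθ : DifferentiableAt ℝ θ z) :
    fderiv ℝ (fun x => θ x - x.2) z (0, 1) = fderiv ℝ θ z (0, 1) - 1 := by
  simp [fderiv_fun_sub hθ differentiableAt_snd, fderiv_snd]

theorem norm_apply_vertical_le (A : ℝ × ℝ →L[ℝ] F) : ‖A (0, 1)‖ ≤ ‖A‖ := by
  simpa using A.le_opNorm (0, 1)

end Vertical

def strip (a : ℝ) : Set (ℝ × ℝ) := Prod.fst ⁻¹' Icc (-a) a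

theorem convex_strip (a : ℝ) : Convex ℝ (strip a) :=
  (convex_Icc (-a) a).linear_preimage (LinearMap.fst ℝ ℝ ℝ)

theorem mk_mem_strip_iff {a s t : ℝ} : (s, t) ∈ strip a ↔ |s| ≤ a := abs_le.symm

theorem mk_zero_mem_strip {a : ℝ} {x : ℝ × ℝ} (hx : x ∈ strip a) (ψ : ℝ) :
    ((0 : ℝ), ψ) ∈ strip a :=
  mk_mem_strip_iff.2 (by simpa using (abs_nonneg x.1).trans (abs_le.2 hx))

theorem norm_sub_mk_fst (x : ℝ × ℝ) (s : ℝ) : ‖x - (s, x.2)‖ = |x.1 - s| := by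
  simp [Prod.norm_def]

theorem eventually_mem_strip {α : Type*} {l : Filter α} {u : α → ℝ × ℝ} {a : ℝ}
    (hu : Tendsto (fun i => (u i).1) l (𝓝 0)) (ha : 0 < a) : ∀ᶠ i in l, u i ∈ strip a :=
  hu (Icc_mem_nhds (neg_neg_of_pos ha) ha)

structure C2LipschitzOn {E F : Type*} [NormedAddCommGroup E] [NormedSpace ℝ E]
    [NormedAddCommGroup F] [NormedSpace ℝ F] (f : E → F) (s : Set E) (M : ℝ) : Prop where
  contDiffAt : ∀ x ∈ s, ContDiffAt ℝ 2 f x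
  lipschitz : ∀ x ∈ s, ∀ y ∈ s, ‖f y - f x‖ ≤ M * ‖y - x‖
  lipschitz_fderiv : ∀ x ∈ s, ∀ y ∈ s, ‖fderiv ℝ f y - fderiv ℝ f x‖ ≤ M * ‖y - x‖
  lipschitz_fderiv_fderiv : ∀ x ∈ s, ∀ y ∈ s,
    ‖fderiv ℝ (fderiv ℝ f) y - fderiv ℝ (fderiv ℝ f) x‖ ≤ M * ‖y - x‖

section Periodic

variable {F : Type*} [NormedAddCommGroup F] {p a : ℝ} {f : ℝ × ℝ → F}

theorem exists_add_zsmul_vertical_mem (hp : 0 < p) (x : ℝ × ℝ) :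
    ∃ k : ℤ, (x + k • ((0 : ℝ), p)).1 = x.1 ∧ (x + k • ((0 : ℝ), p)).2 ∈ Ico 0 p := by
  obtain ⟨k, hk, -⟩ := existsUnique_add_zsmul_mem_Ico hp x.2 0
  exact ⟨k, by simp, by simpa using hk⟩

theorem Function.Periodic.exists_bound_strip (hp : 0 < p) (hper : Periodic f (0, p))
    (hf : ∀ x ∈ strip a, ContinuousAt f x) : ∃ M, ∀ x ∈ strip a, ‖f x‖ ≤ M := by
  have hK : IsCompact (Icc (-a) a ×ˢ Icc 0 p) := isCompact_Icc.prod isCompact_Icc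
  obtain ⟨M, hM⟩ := hK.exists_bound_of_continuousOn
    (continuousOn_of_forall_continuousAt fun x hx => hf x hx.1)
  refine ⟨M, fun x hx => ?_⟩
  obtain ⟨k, hk₁, hk₂⟩ := exists_add_zsmul_vertical_mem hp x
  rw [← hper.zsmul k x]
  exact hM _ ⟨by simpa [strip, hk₁] using hx, Ico_subset_Icc_self hk₂⟩

variable [NormedSpace ℝ F]

theorem Function.Periodic.fderiv {E : Type*} [NormedAddCommGroup E]
    [NormedSpace ℝ E] {f : E → F} {c : E} (hf : Periodic f c) : Periodic (fderiv ℝ f) c :=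
  fun x => by rw [← fderiv_comp_add_right, funext hf]

theorem Function.Periodic.exists_contDiffAt_strip {U : Set (ℝ × ℝ)} (hU : IsOpen U)
    (haxis : ∀ ψ : ℝ, ((0 : ℝ), ψ) ∈ U) (hp : 0 < p) (hper : Periodic f (0, p)) {n : WithTop ℕ∞}
    (hf : ContDiffOn ℝ n f U) : ∃ a > 0, ∀ x ∈ strip a, ContDiffAt ℝ n f x := by
  have hK : IsCompact ({(0 : ℝ)} ×ˢ Icc 0 p) := isCompact_singleton.prod isCompact_Icc
  obtain ⟨δ, hδ, hδU⟩ := hK.exists_thickening_subset_open hU fun x hx => by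
    rw [← Prod.mk.eta (p := x), hx.1]; exact haxis x.2
  refine ⟨δ / 2, half_pos hδ, fun x hx => ?_⟩
  obtain ⟨k, hk₁, hk₂⟩ := exists_add_zsmul_vertical_mem hp x
  set y := x + k • ((0 : ℝ), p)
  have hyU : y ∈ U := hδU <| Metric.mem_thickening_iff.2
    ⟨(0, y.2), ⟨rfl, Ico_subset_Icc_self hk₂⟩, by
      rw [Prod.dist_eq, dist_self, Real.dist_eq, sub_zero, hk₁]
      exact max_lt (by linarith [abs_le.2 hx]) hδ⟩
  have hshift : (fun z => f (z + k • ((0 : ℝ), p))) = f := funext (hper.zsmul k)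
  rw [← hshift]
  exact (hf.contDiffAt (hU.mem_nhds hyU)).comp x (contDiffAt_id.add contDiffAt_const)

theorem Function.Periodic.exists_lipschitz_strip (hp : 0 < p) (hper : Periodic f (0, p))
    (hf : ∀ x ∈ strip a, ContDiffAt ℝ 1 f x) :
    ∃ L, ∀ x ∈ strip a, ∀ y ∈ strip a, ‖f y - f x‖ ≤ L * ‖y - x‖ := by
  obtain ⟨L, hL⟩ := hper.fderiv.exists_bound_strip hp fun x hx =>
    ((hf x hx).fderiv_right (m := 0) le_rfl).continuousAt
  exact ⟨L, fun x hx y hy => (convex_strip a).norm_image_sub_le_of_norm_fderiv_le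
    (fun z hz => (hf z hz).differentiableAt one_ne_zero) hL hx hy⟩

theorem Function.Periodic.exists_c2LipschitzOn_strip {U : Set (ℝ × ℝ)} (hU : IsOpen U)
    (haxis : ∀ ψ : ℝ, ((0 : ℝ), ψ) ∈ U) (hp : 0 < p) (hper : Periodic f (0, p))
    (hf : ContDiffOn ℝ 3 f U) : ∃ a > 0, ∃ M, C2LipschitzOn f (strip a) M := by
  obtain ⟨a, ha, hfa⟩ := hper.exists_contDiffAt_strip hU haxis hp hf
  obtain ⟨M₀, hM₀⟩ := hper.exists_lipschitz_strip hp fun x hx => (hfa x hx).of_le (by norm_num)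
  obtain ⟨M₁, hM₁⟩ := hper.fderiv.exists_lipschitz_strip hp fun x hx =>
    (hfa x hx).fderiv_right (by norm_num)
  obtain ⟨M₂, hM₂⟩ := hper.fderiv.fderiv.exists_lipschitz_strip hp fun x hx =>
    ((hfa x hx).fderiv_right (m := 2) le_rfl).fderiv_right le_rfl
  refine ⟨a, ha, max M₀ (max M₁ M₂), fun x hx => (hfa x hx).of_le (by norm_num), ?_, ?_, ?_⟩ <;>
    intro x hx y hy
  · exact (hM₀ x hx y hy).trans (by gcongr; exact le_max_left _ _)
  · exact (hM₁ x hx y hy).trans (by gcongr; exact (le_max_left _ _).trans (le_max_right _ _))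
  · exact (hM₂ x hx y hy).trans (by gcongr; exact (le_max_right _ _).trans (le_max_right _ _))

end Periodic

namespace C2LipschitzOn

variable {g : ℝ × ℝ → ℝ} {a M : ℝ} {x : ℝ × ℝ}

theorem abs_sub_le (hg : C2LipschitzOn g (strip a) M) {y : ℝ × ℝ} {B : ℝ}
    (hB : ∀ ψ, |fderiv ℝ g (x.1, ψ) (0, 1)| ≤ B)
    (hx : x ∈ strip a) (hy : y ∈ strip a) :
    |g y - g x| ≤ M * |y.1 - x.1| + B * |y.2 - x.2| := by
  have horiz : |g y - g (x.1, y.2)| ≤ M * |y.1 - x.1| := by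
    simpa [norm_sub_mk_fst] using hg.lipschitz (x.1, y.2) hx y hy
  have vert : |g (x.1, y.2) - g x| ≤ B * |y.2 - x.2| := by
    simpa using norm_sub_le_of_norm_fderiv_vertical_le
      (fun t => (hg.contDiffAt (x.1, t) hx).differentiableAt two_ne_zero) hB y.2 x.2
  linarith [_root_.abs_sub_le (g y) (g (x.1, y.2)) (g x)]

theorem abs_fderiv_vertical_le (hg : C2LipschitzOn g (strip a) M)
    (hg₀ : ∀ ψ, fderiv ℝ g (0, ψ) (0, 1) = 0) (hx : x ∈ strip a) :
    |fderiv ℝ g x (0, 1)| ≤ M * |x.1| := by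
  have h := hg.lipschitz_fderiv (0, x.2) (mk_zero_mem_strip hx x.2) x hx
  rw [norm_sub_mk_fst, sub_zero] at h
  calc |fderiv ℝ g x (0, 1)| = ‖(fderiv ℝ g x - fderiv ℝ g (0, x.2)) (0, 1)‖ := by
        simp [hg₀]
    _ ≤ M * |x.1| := (norm_apply_vertical_le _).trans h

theorem abs_sub_fst_le (hg : C2LipschitzOn g (strip a) M) (hg₀ : ∀ ψ, g (0, ψ) = 0)
    (hg₁ : ∀ ψ, fderiv ℝ g (0, ψ) (1, 0) = 1) (hx : x ∈ strip a) :
    |g x - x.1| ≤ M * x.1 ^ 2 := by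
  have h := (convex_strip a).norm_image_sub_sub_fderiv_le
    (fun z hz => (hg.contDiffAt z hz).differentiableAt two_ne_zero) hg.lipschitz_fderiv
    (mk_zero_mem_strip hx x.2) hx
  have hdir : x - (0, x.2) = x.1 • ((1 : ℝ), (0 : ℝ)) := by ext <;> simp
  rwa [hdir, map_smul, hg₀, hg₁, smul_eq_mul, mul_one, sub_zero, ← hdir, norm_sub_mk_fst,
    sub_zero, sq_abs] at h

theorem abs_fderiv_vertical_le_sq (hg : C2LipschitzOn g (strip a) M) (hg₀ : ∀ ψ, g (0, ψ) = 0)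
    (hg₁ : ∀ ψ, fderiv ℝ g (0, ψ) (1, 0) = 1) (hx : x ∈ strip a) :
    |fderiv ℝ g x (0, 1)| ≤ M * x.1 ^ 2 := by
  set x₀ : ℝ × ℝ := (0, x.2)
  have hx₀ : x₀ ∈ strip a := mk_zero_mem_strip hx x.2
  have hD : ∀ z ∈ strip a, HasFDerivAt (fderiv ℝ g) (fderiv ℝ (fderiv ℝ g) z) z := fun z hz =>
    (((hg.contDiffAt z hz).fderiv_right (m := 1) le_rfl).differentiableAt one_ne_zero).hasFDerivAt
  have hvert₀ : fderiv ℝ g x₀ (0, 1) = 0 :=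
    ((hg.contDiffAt x₀ hx₀).differentiableAt two_ne_zero).hasFDerivAt.apply_vertical_eq_zero hg₀
  -- `∂_r g ≡ 1` on the axis, so the mixed partial `∂_φ ∂_r g = ∂_r ∂_φ g` vanishes there.
  have hmixed₀ : fderiv ℝ (fderiv ℝ g) x₀ (1, 0) (0, 1) = 0 := by
    rw [(hg.contDiffAt x₀ hx₀).isSymmSndFDerivAt (by simp)]
    simpa using ((hD x₀ hx₀).clm_apply (hasFDerivAt_const ((1 : ℝ), (0 : ℝ)) x₀)
      ).apply_vertical_eq_zero hg₁
  have h := (convex_strip a).norm_image_sub_sub_fderiv_le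
    (fun z hz => (hD z hz).differentiableAt) hg.lipschitz_fderiv_fderiv hx₀ hx
  have hdir : x - x₀ = x.1 • ((1 : ℝ), (0 : ℝ)) := by ext <;> simp [x₀]
  rw [norm_sub_mk_fst, sub_zero, sq_abs] at h
  calc |fderiv ℝ g x (0, 1)|
      = ‖(fderiv ℝ g x - fderiv ℝ g x₀ - fderiv ℝ (fderiv ℝ g) x₀ (x - x₀)) (0, 1)‖ := by
        rw [hdir, map_smul, sub_apply, sub_apply, smul_apply, hvert₀, hmixed₀, smul_zero,
          sub_zero, sub_zero, Real.norm_eq_abs]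
    _ ≤ M * x.1 ^ 2 := (norm_apply_vertical_le _).trans h

end C2LipschitzOn

def nearAxis : Filter (ℝ × ℝ) := comap Prod.fst (𝓝[>] 0)

theorem eventually_nearAxis_iff {P : ℝ × ℝ → Prop} :
    (∀ᶠ x in nearAxis, P x) ↔ ∃ ε > 0, ∀ r φ : ℝ, 0 < r → r < ε → P (r, φ) := by
  simp only [nearAxis, eventually_comap, (nhdsGT_basis (0 : ℝ)).eventually_iff, mem_Ioo]
  refine exists_congr fun ε => and_congr_right fun _ => ⟨?_, ?_⟩
  · exact fun h r φ hr hrε => h ⟨hr, hrε⟩ (r, φ) rfl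
  · rintro h r ⟨hr, hrε⟩ x rfl
    exact h x.1 x.2 hr hrε

theorem tendsto_fst_nearAxis : Tendsto Prod.fst nearAxis (𝓝 0) :=
  tendsto_comap.mono_right nhdsWithin_le_nhds

theorem eventually_fst_pos_nearAxis : ∀ᶠ x in nearAxis, 0 < x.1 :=
  tendsto_comap.eventually self_mem_nhdsWithin

theorem isBigO_fst_pow_nearAxis {m n : ℕ} (h : m ≤ n) :
    (fun x : ℝ × ℝ => x.1 ^ n) =O[nearAxis] (fun x => x.1 ^ m) := by
  rcases h.eq_or_lt with rfl | hlt
  · exact isBigO_refl _ _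
  · exact ((isLittleO_pow_pow hlt).comp_tendsto tendsto_fst_nearAxis).isBigO

theorem IsPerturbedSkewRotation.isBigO {T : ℝ × ℝ → ℝ × ℝ} {h : ℝ}
    (hT : IsPerturbedSkewRotation T h) :
    (fun x => (T x).2 - x.2 - h * x.1) =O[nearAxis] (fun x => x.1 ^ 2) ∧
      (fun x => (T x).1 - x.1) =O[nearAxis] (fun x => x.1 ^ 3) := by
  obtain ⟨C, hC, ε, hε, hb⟩ := hT
  have hev : ∀ᶠ x in nearAxis,
      |(T x).2 - x.2 - h * x.1| ≤ C * x.1 ^ 2 ∧ |(T x).1 - x.1| ≤ C * x.1 ^ 3 :=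
    eventually_nearAxis_iff.2 ⟨ε, hε, hb⟩
  refine ⟨.of_bound C (hev.mono fun x hx => ?_), .of_bound C (hev.mono fun x hx => ?_)⟩
  · simpa [Real.norm_eq_abs] using hx.1.trans (mul_le_mul_of_nonneg_left (le_abs_self _) hC.le)
  · simpa [Real.norm_eq_abs] using hx.2.trans (mul_le_mul_of_nonneg_left (le_abs_self _) hC.le)

theorem IsPerturbedSkewRotation.isBigO_snd_sub {T : ℝ × ℝ → ℝ × ℝ} {h : ℝ}
    (hT : IsPerturbedSkewRotation T h) : (fun x => (T x).2 - x.2) =O[nearAxis] Prod.fst :=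
  ((hT.isBigO.1.trans (by simpa using isBigO_fst_pow_nearAxis (m := 1) one_le_two)).add
    ((isBigO_refl Prod.fst _).const_mul_left h)).congr (fun x => by ring) (fun _ => rfl)

theorem exists_bound_nearAxis_of_isBigO {f₁ f₂ g : ℝ × ℝ → ℝ} {m n : ℕ}
    (h₁ : f₁ =O[nearAxis] fun x => g x ^ m) (h₂ : f₂ =O[nearAxis] fun x => g x ^ n)
    (hg : ∀ᶠ x in nearAxis, 0 < g x) :
    ∃ C > 0, ∃ ε > 0, ∀ r φ : ℝ, 0 < r → r < ε →
      |f₁ (r, φ)| ≤ C * g (r, φ) ^ m ∧ |f₂ (r, φ)| ≤ C * g (r, φ) ^ n := by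
  obtain ⟨c₁, hc₁, h₁⟩ := h₁.exists_pos
  obtain ⟨c₂, -, h₂⟩ := h₂.exists_pos
  obtain ⟨ε, hε, H⟩ := eventually_nearAxis_iff.1 ((h₁.bound.and h₂.bound).and hg)
  refine ⟨max c₁ c₂, lt_max_of_lt_left hc₁, ε, hε, fun r φ hr hrε => ?_⟩
  obtain ⟨⟨hb₁, hb₂⟩, hpos⟩ := H r φ hr hrε
  simp only [Real.norm_eq_abs, abs_pow, abs_of_pos hpos] at hb₁ hb₂
  exact ⟨hb₁.trans (by gcongr; exact le_max_left _ _),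
    hb₂.trans (by gcongr; exact le_max_right _ _)⟩

theorem C2LipschitzOn.isBigO_comp_sub {g : ℝ × ℝ → ℝ} {a M : ℝ}
    (hg : C2LipschitzOn g (strip a) M) (ha : 0 < a) {k : ℕ}
    (hB : ∀ x ∈ strip a, |fderiv ℝ g x (0, 1)| ≤ M * |x.1| ^ k) {T : ℝ × ℝ → ℝ × ℝ}
    (hT₁ : (fun x => (T x).1 - x.1) =O[nearAxis] (fun x => x.1 ^ (k + 1)))
    (hT₂ : (fun x => (T x).2 - x.2) =O[nearAxis] Prod.fst) :
    (fun x => g (T x) - g x) =O[nearAxis] (fun x => x.1 ^ (k + 1)) := by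
  have hT : Tendsto (fun x => (T x).1) nearAxis (𝓝 0) := by
    have h₀ : Tendsto (fun x : ℝ × ℝ => x.1 ^ (k + 1)) nearAxis (𝓝 0) := by
      simpa using tendsto_fst_nearAxis.pow (k + 1)
    simpa using (hT₁.trans_tendsto h₀).add tendsto_fst_nearAxis
  have hbound : ∀ᶠ x in nearAxis,
      ‖g (T x) - g x‖ ≤ ‖M * |(T x).1 - x.1| + M * |x.1| ^ k * |(T x).2 - x.2|‖ := by
    filter_upwards [eventually_mem_strip tendsto_fst_nearAxis ha, eventually_mem_strip hT ha]
      with x hx hTx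
    exact (hg.abs_sub_le (fun ψ => hB (x.1, ψ) hx) hx hTx).trans (le_abs_self _)
  refine (IsBigO.of_bound' hbound).trans ((isBigO_abs_left.2 hT₁).const_mul_left M |>.add ?_)
  have hvert := (((isBigO_abs_left.2 (isBigO_refl Prod.fst nearAxis)).pow k).mul
    (isBigO_abs_left.2 hT₂)).const_mul_left M
  exact hvert.congr (fun x => by ring) (fun x => by ring)

theorem perturbedSkewRotation_concordant_coords_general
    (U : Set (ℝ × ℝ)) (hUopen : IsOpen U) (hU : ∀ φ : ℝ, ((0 : ℝ), φ) ∈ U)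
    (ρ θ : ℝ × ℝ → ℝ)
    (hρa : AnalyticOnNhd ℝ ρ U) (hθa : AnalyticOnNhd ℝ θ U)
    (hρper : ∀ r φ : ℝ, ρ (r, φ + 2 * Real.pi) = ρ (r, φ))
    (hθper : ∀ r φ : ℝ, θ (r, φ + 2 * Real.pi) = θ (r, φ) + 2 * Real.pi)
    (hρ0 : ∀ φ : ℝ, ρ (0, φ) = 0)
    (hρr : ∀ φ : ℝ, fderiv ℝ ρ (0, φ) (1, 0) = 1)
    (hθφ : ∀ φ : ℝ, fderiv ℝ θ (0, φ) (0, 1) = 1)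
    (T : ℝ × ℝ → ℝ × ℝ) (h : ℝ)
    (hT : IsPerturbedSkewRotation T h) :
    ∃ C' > (0 : ℝ), ∃ ε' > (0 : ℝ), ∀ r φ : ℝ, 0 < r → r < ε' →
      |ρ (T (r, φ)) - ρ (r, φ)| ≤ C' * ρ (r, φ) ^ 3 ∧
      |θ (T (r, φ)) - θ (r, φ) - h * ρ (r, φ)| ≤ C' * ρ (r, φ) ^ 2 := by
  obtain ⟨hT₂, hT₁⟩ := hT.isBigO
  obtain ⟨a, ha, M, hρ⟩ := Periodic.exists_c2LipschitzOn_strip hUopen hU Real.two_pi_pos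
    (fun ⟨r, φ⟩ => by simpa using hρper r φ) hρa.contDiffOn_of_completeSpace
  obtain ⟨b, hb, N, hϑ⟩ := Periodic.exists_c2LipschitzOn_strip (f := fun x => θ x - x.2)
    hUopen hU Real.two_pi_pos (fun ⟨r, φ⟩ => by simp [hθper])
    (hθa.contDiffOn_of_completeSpace.sub contDiffOn_snd)
  have hρ_sub : (fun x => ρ x - x.1) =O[nearAxis] (fun x => x.1 ^ 2) :=
    .of_bound M <| (eventually_mem_strip tendsto_fst_nearAxis ha).mono fun x hx => by
      simpa using hρ.abs_sub_fst_le hρ0 hρr hx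
  have hρ_fst : ρ ~[nearAxis] Prod.fst :=
    hρ_sub.trans_isLittleO ((isLittleO_pow_id one_lt_two).comp_tendsto tendsto_fst_nearAxis)
  have hradial := hρ.isBigO_comp_sub ha (k := 2)
    (fun x hx => by simpa using hρ.abs_fderiv_vertical_le_sq hρ0 hρr hx) hT₁ hT.isBigO_snd_sub
  have hangular := hϑ.isBigO_comp_sub hb (k := 1)
    (fun x hx => by simpa using hϑ.abs_fderiv_vertical_le (fun ψ => by
      rw [fderiv_sub_snd_apply_vertical (hθa _ (hU ψ)).differentiableAt, hθφ, sub_self]) hx)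
    (hT₁.trans (isBigO_fst_pow_nearAxis (by norm_num))) hT.isBigO_snd_sub
  have htwist : (fun x => θ (T x) - θ x - h * ρ x) =O[nearAxis] (fun x => x.1 ^ 2) :=
    ((hangular.add hT₂).sub (hρ_sub.const_mul_left h)).congr (fun x => by ring) (fun _ => rfl)
  exact exists_bound_nearAxis_of_isBigO (hradial.trans (hρ_fst.symm.isBigO.pow 3))
    (htwist.trans (hρ_fst.symm.isBigO.pow 2)) (hρ_fst.eventually_pos eventually_fst_pos_nearAxis)

/-- A perturbed skew rotation in the coordinates `(r, φ)` with angular coefficient `h`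
is also a perturbed skew rotation, with the same coefficient `h`, in any coordinates
`(ρ, θ)` concordant with `(r, φ)`. -/
theorem perturbedSkewRotation_concordant_coords
    (U : Set (ℝ × ℝ)) (hUopen : IsOpen U) (hU : ∀ φ : ℝ, ((0 : ℝ), φ) ∈ U)
    (ρ θ : ℝ × ℝ → ℝ)
    (hρa : AnalyticOnNhd ℝ ρ U) (hθa : AnalyticOnNhd ℝ θ U)
    (hρper : ∀ r φ : ℝ, ρ (r, φ + 2 * Real.pi) = ρ (r, φ))
    (hθper : ∀ r φ : ℝ, θ (r, φ + 2 * Real.pi) = θ (r, φ) + 2 * Real.pi)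
    (hρ0 : ∀ φ : ℝ, ρ (0, φ) = 0)
    (hρr : ∀ φ : ℝ, fderiv ℝ ρ (0, φ) (1, 0) = 1)
    (hθφ : ∀ φ : ℝ, fderiv ℝ θ (0, φ) (0, 1) = 1)
    (T : ℝ × ℝ → ℝ × ℝ) (h : ℝ)
    (hTe : TwoPiEquivariant T) (hT : IsPerturbedSkewRotation T h) :
    ∃ C' > (0 : ℝ), ∃ ε' > (0 : ℝ), ∀ r φ : ℝ, 0 < r → r < ε' →
      |ρ (T (r, φ)) - ρ (r, φ)| ≤ C' * ρ (r, φ) ^ 3 ∧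
      |θ (T (r, φ)) - θ (r, φ) - h * ρ (r, φ)| ≤ C' * ρ (r, φ) ^ 2 :=
  perturbedSkewRotation_concordant_coords_general U hUopen hU ρ θ hρa hθa hρper hθper hρ0 hρr hθφ T
    h hT
end

section
/- Let ρ_0, ρ_1 : ℝ → (0, ∞) be continuous 2π-periodic functions with ρ_0(θ) < ρ_1(θ) for all θ, let γ_i = {ρ_i(θ)·e^{iθ} : θ ∈ ℝ} (i = 0, 1) be the corresponding closed radial curves, and let A = {r·e^{iθ} : θ ∈ ℝ, ρ_0(θ) ≤ r ≤ ρ_1(θ)} be the closed annulus bounded by γ_0 and γ_1. Let B ⊆ ℂ be an open set with A ⊆ B and let T : B → B be a homeomorphism of B onto itself. If T(γ_0) = γ_0 and T(γ_1) = γ_1, then T(A) = A. -/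
open Complex Set Function

/-- The closed radial curve `{ρ(θ)·e^{iθ} : θ ∈ ℝ}` around `0` in `ℂ`. -/
noncomputable def radialCurve (ρ : ℝ → ℝ) : Set ℂ :=
  {z : ℂ | ∃ θ : ℝ, z = (ρ θ : ℂ) * Complex.exp (Complex.I * (θ : ℂ))}

/-- The closed annulus `{r·e^{iθ} : θ ∈ ℝ, ρ₀(θ) ≤ r ≤ ρ₁(θ)}` bounded by the radial
curves of `ρ₀` and `ρ₁`. -/
noncomputable def radialAnnulus (ρ₀ ρ₁ : ℝ → ℝ) : Set ℂ :=
  {z : ℂ | ∃ θ r : ℝ, ρ₀ θ ≤ r ∧ r ≤ ρ₁ θ ∧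
    z = (r : ℂ) * Complex.exp (Complex.I * (θ : ℂ))}

/-!
Let `U` be the open annulus, so that `A = U ∪ γ₀ ∪ γ₁`. As `T` is injective on `A` and maps
each `γᵢ` onto itself, the connected set `T(U)` misses `γ₀ ∪ γ₁`, hence lies either in `U` or
in the complement of `A`. In the second case the connected set `T(A) = T(U) ∪ γ₀ ∪ γ₁` meets
both the open region inside `γ₁` (at `γ₀`) and the open region outside `γ₀` (at `γ₁`), but not
their intersection `U`; since these two regions cover `ℂ`, this is impossible. So `T(A) ⊆ A`,
and the same argument for `T⁻¹` gives `A ⊆ T(A)`.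
-/

theorem isPreconnected_setOf_mem_image_lineMap {X E : Type*} [TopologicalSpace X]
    [PreconnectedSpace X] [AddCommGroup E] [Module ℝ E] [TopologicalSpace E]
    [IsTopologicalAddGroup E] [ContinuousSMul ℝ E] {a b : X → E} (ha : Continuous a)
    (hb : Continuous b) {I : Set ℝ} (hI : IsPreconnected I) :
    IsPreconnected {p : X × E | p.2 ∈ AffineMap.lineMap (a p.1) (b p.1) '' I} := by
  have hparam : {p : X × E | p.2 ∈ AffineMap.lineMap (a p.1) (b p.1) '' I} =
      (fun q : X × ℝ => (q.1, AffineMap.lineMap (a q.1) (b q.1) q.2)) '' (univ ×ˢ I) := by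
    ext ⟨x, e⟩
    simp [eq_comm]
  rw [hparam]
  exact (isPreconnected_univ.prod hI).image _
    (continuous_fst.prodMk ((ha.comp continuous_fst).lineMap (hb.comp continuous_fst)
      continuous_snd)).continuousOn

theorem mapsTo_of_injOn_of_image_eq {X : Type*} [TopologicalSpace X]
    {u v γ₀ γ₁ A : Set X} {f : X → X} (hu : IsOpen u) (hv : IsOpen v) (huv : u ∪ v = univ)
    (hγ₀ : γ₀ ⊆ u \ v) (hγ₁ : γ₁ ⊆ v \ u) (hne₀ : γ₀.Nonempty) (hne₁ : γ₁.Nonempty)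
    (hA : A = u ∩ v ∪ (γ₀ ∪ γ₁)) (hAclosed : IsClosed A)
    (hUconn : IsPreconnected (u ∩ v)) (hAconn : IsPreconnected A)
    (hf : ContinuousOn f A) (hinj : InjOn f A) (hf₀ : f '' γ₀ = γ₀) (hf₁ : f '' γ₁ = γ₁) :
    MapsTo f A A := by
  subst hA
  have hUγ : Disjoint (u ∩ v) (γ₀ ∪ γ₁) := by
    rw [disjoint_union_right]
    exact ⟨disjoint_of_subset_left inter_subset_right (subset_sdiff.mp hγ₀).2.symm,
      disjoint_of_subset_left inter_subset_left (subset_sdiff.mp hγ₁).2.symm⟩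
  have hfA : f '' (u ∩ v ∪ (γ₀ ∪ γ₁)) = f '' (u ∩ v) ∪ (γ₀ ∪ γ₁) := by
    rw [image_union, image_union, hf₀, hf₁]
  have hfUγ : Disjoint (f '' (u ∩ v)) (γ₀ ∪ γ₁) := by
    rw [← hf₀, ← hf₁, ← image_union, disjoint_iff_inter_eq_empty,
      ← hinj.image_inter subset_union_left subset_union_right, hUγ.inter_eq, image_empty]
  have hcover : f '' (u ∩ v) ⊆ u ∩ v ∪ (u ∩ v ∪ (γ₀ ∪ γ₁))ᶜ := by
    intro z hz
    by_cases hzA : z ∈ u ∩ v ∪ (γ₀ ∪ γ₁)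
    · exact Or.inl (hzA.resolve_right (hfUγ.notMem_of_mem_left hz))
    · exact Or.inr hzA
  rcases (hUconn.image f (hf.mono subset_union_left)).subset_or_subset (hu.inter hv)
    hAclosed.isOpen_compl (disjoint_compl_right.mono_left subset_union_left) hcover
    with hin | hout
  · rw [mapsTo_iff_image_subset, hfA]
    exact union_subset_union_left _ hin
  · exfalso
    obtain ⟨z₀, hz₀⟩ := hne₀
    obtain ⟨z₁, hz₁⟩ := hne₁
    obtain ⟨z, hzA, hzU⟩ := hAconn.image f hf u v hu hv (huv ▸ subset_univ _)
      ⟨z₀, hfA ▸ Or.inr (Or.inl hz₀), (hγ₀ hz₀).1⟩ ⟨z₁, hfA ▸ Or.inr (Or.inr hz₁), (hγ₁ hz₁).1⟩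
    rw [hfA] at hzA
    rcases hzA with hz | hz
    · exact hout hz (Or.inl hzU)
    · exact hUγ.notMem_of_mem_left hzU hz

noncomputable def ofAngleRadius (p : ℝ × ℝ) : ℂ := p.2 * exp (I * p.1)

theorem continuous_ofAngleRadius : Continuous ofAngleRadius := by
  unfold ofAngleRadius
  fun_prop

theorem image_ofAngleRadius_setOf {P : ℝ → ℝ → Prop} (hP : Periodic P (2 * Real.pi))
    (hpos : ∀ θ r, P θ r → 0 < r) :
    ofAngleRadius '' {p | P p.1 p.2} = {z | z ≠ 0 ∧ P (arg z) ‖z‖} := by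
  ext z
  constructor
  · rintro ⟨⟨θ, r⟩, h, rfl⟩
    have hr : 0 < r := hpos θ r h
    have hnorm : ‖ofAngleRadius (θ, r)‖ = r := by
      simp [ofAngleRadius, norm_exp_I_mul_ofReal, hr.le]
    refine ⟨norm_pos_iff.mp (by rwa [hnorm]), ?_⟩
    rw [hnorm, ofAngleRadius, arg_real_mul _ hr, mul_comm, arg_exp_mul_I,
      ← self_sub_toIocDiv_zsmul, hP.sub_zsmul_eq]
    exact h
  · rintro ⟨-, h⟩
    exact ⟨(arg z, ‖z‖), h, by rw [ofAngleRadius, mul_comm I]; exact norm_mul_exp_arg_mul_I z⟩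

theorem radialCurve_eq_image (ρ : ℝ → ℝ) :
    radialCurve ρ = ofAngleRadius '' {p | p.2 = ρ p.1} := by
  ext z
  simp [radialCurve, ofAngleRadius, eq_comm]

theorem radialAnnulus_eq_image (ρ₀ ρ₁ : ℝ → ℝ) :
    radialAnnulus ρ₀ ρ₁ = ofAngleRadius '' {p | p.2 ∈ Icc (ρ₀ p.1) (ρ₁ p.1)} := by
  ext z
  simp [radialAnnulus, ofAngleRadius, eq_comm, and_assoc]

-- The origin is listed separately because `arg 0 = 0` is a junk value.
def radialInterior (ρ : ℝ → ℝ) : Set ℂ := {z | z = 0 ∨ ‖z‖ < ρ (arg z)}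

def radialExterior (ρ : ℝ → ℝ) : Set ℂ := {z | z ≠ 0 ∧ ρ (arg z) < ‖z‖}

section Radial

variable {ρ ρ' ρ₀ ρ₁ : ℝ → ℝ}

theorem continuousOn_comp_arg (hc : Continuous ρ) (hper : Periodic ρ (2 * Real.pi)) :
    ContinuousOn (fun z : ℂ => ρ (arg z)) {0}ᶜ := by
  have hlift : (fun z : ℂ => ρ (arg z)) = hper.lift ∘ ((↑) : ℝ → Real.Angle) ∘ arg :=
    funext fun z => (hper.lift_coe _).symm
  rw [hlift]
  exact fun z hz => ((hc.quotient_liftOn' _).continuousAt.comp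
    (continuousAt_arg_coe_angle hz)).continuousWithinAt

theorem isOpen_radialExterior (hc : Continuous ρ) (hper : Periodic ρ (2 * Real.pi)) :
    IsOpen (radialExterior ρ) :=
  ((continuousOn_comp_arg hc hper).prodMk continuous_norm.continuousOn).isOpen_inter_preimage
    isOpen_compl_singleton isOpen_lt_prod

theorem isOpen_radialInterior (hc : Continuous ρ) (hper : Periodic ρ (2 * Real.pi))
    (hpos : ∀ θ, 0 < ρ θ) : IsOpen (radialInterior ρ) := by
  -- Near `0`, where `arg` is discontinuous, the positive minimum of `ρ` provides a ball.
  obtain ⟨_, ⟨θ₀, rfl⟩, hmin⟩ :=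
    (hper.compact_of_continuous Real.two_pi_pos.ne' hc).exists_isLeast (range_nonempty ρ)
  have hball : radialInterior ρ =
      Metric.ball 0 (ρ θ₀) ∪ {0}ᶜ ∩ (fun z : ℂ => (‖z‖, ρ (arg z))) ⁻¹' {p | p.1 < p.2} := by
    ext z
    by_cases hz : z = 0
    · simp [radialInterior, hz, hpos θ₀]
    · simpa [radialInterior, hz] using fun h => h.trans_le (hmin ⟨_, rfl⟩)
  rw [hball]
  exact Metric.isOpen_ball.union ((continuous_norm.continuousOn.prodMk
    (continuousOn_comp_arg hc hper)).isOpen_inter_preimage isOpen_compl_singleton isOpen_lt_prod)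

theorem radialCurve_eq_setOf (hper : Periodic ρ (2 * Real.pi)) (hpos : ∀ θ, 0 < ρ θ) :
    radialCurve ρ = {z | z ≠ 0 ∧ ‖z‖ = ρ (arg z)} := by
  rw [radialCurve_eq_image, image_ofAngleRadius_setOf (P := fun θ r => r = ρ θ)
    (fun θ => by simp only [hper θ]) (fun θ r h => h ▸ hpos θ)]

theorem radialAnnulus_eq_setOf (hper₀ : Periodic ρ₀ (2 * Real.pi))
    (hper₁ : Periodic ρ₁ (2 * Real.pi)) (hpos : ∀ θ, 0 < ρ₀ θ) :
    radialAnnulus ρ₀ ρ₁ = {z | z ≠ 0 ∧ ‖z‖ ∈ Icc (ρ₀ (arg z)) (ρ₁ (arg z))} := by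
  rw [radialAnnulus_eq_image, image_ofAngleRadius_setOf (P := fun θ r => r ∈ Icc (ρ₀ θ) (ρ₁ θ))
    (fun θ => by simp only [hper₀ θ, hper₁ θ]) (fun θ r h => (hpos θ).trans_le h.1)]

theorem radialInterior_inter_radialExterior (hper₀ : Periodic ρ₀ (2 * Real.pi))
    (hper₁ : Periodic ρ₁ (2 * Real.pi)) (hpos : ∀ θ, 0 < ρ₀ θ) :
    radialInterior ρ₁ ∩ radialExterior ρ₀ =
      ofAngleRadius '' {p | p.2 ∈ Ioo (ρ₀ p.1) (ρ₁ p.1)} := by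
  rw [image_ofAngleRadius_setOf (P := fun θ r => r ∈ Ioo (ρ₀ θ) (ρ₁ θ))
    (fun θ => by simp only [hper₀ θ, hper₁ θ]) (fun θ r h => (hpos θ).trans h.1)]
  ext z
  simp only [radialInterior, radialExterior, mem_inter_iff, mem_ofPred_eq, mem_Ioo]
  tauto

theorem radialInterior_union_radialExterior (hlt : ∀ θ, ρ₀ θ < ρ₁ θ) :
    radialInterior ρ₁ ∪ radialExterior ρ₀ = univ := by
  refine eq_univ_of_forall fun z => ?_
  by_cases hz : z = 0
  · exact Or.inl (Or.inl hz)
  · exact (lt_or_ge ‖z‖ (ρ₁ (arg z))).imp Or.inr fun h => ⟨hz, (hlt _).trans_le h⟩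

theorem radialCurve_subset_radialInterior_diff (hper : Periodic ρ (2 * Real.pi))
    (hpos : ∀ θ, 0 < ρ θ) (hlt : ∀ θ, ρ θ < ρ' θ) :
    radialCurve ρ ⊆ radialInterior ρ' \ radialExterior ρ := by
  rw [radialCurve_eq_setOf hper hpos]
  rintro z ⟨-, h⟩
  simp [radialInterior, radialExterior, h, hlt]

theorem radialCurve_subset_radialExterior_diff (hper : Periodic ρ (2 * Real.pi))
    (hpos : ∀ θ, 0 < ρ θ) (hlt : ∀ θ, ρ' θ < ρ θ) :
    radialCurve ρ ⊆ radialExterior ρ' \ radialInterior ρ := by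
  rw [radialCurve_eq_setOf hper hpos]
  rintro z ⟨hz, h⟩
  simp [radialInterior, radialExterior, hz, h, hlt]

theorem radialAnnulus_eq_union (hper₀ : Periodic ρ₀ (2 * Real.pi))
    (hper₁ : Periodic ρ₁ (2 * Real.pi)) (hpos : ∀ θ, 0 < ρ₀ θ) (hlt : ∀ θ, ρ₀ θ < ρ₁ θ) :
    radialAnnulus ρ₀ ρ₁ =
      radialInterior ρ₁ ∩ radialExterior ρ₀ ∪ (radialCurve ρ₀ ∪ radialCurve ρ₁) := by
  rw [radialAnnulus_eq_setOf hper₀ hper₁ hpos, radialCurve_eq_setOf hper₀ hpos,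
    radialCurve_eq_setOf hper₁ fun θ => (hpos θ).trans (hlt θ)]
  ext z
  by_cases hz : z = 0
  · simp [radialInterior, radialExterior, hz]
  · have := hlt (arg z)
    simp only [radialInterior, radialExterior, mem_ofPred_eq, mem_union, mem_inter_iff, mem_Icc,
      hz]
    grind

theorem isClosed_radialAnnulus (hc₀ : Continuous ρ₀) (hc₁ : Continuous ρ₁)
    (hper₀ : Periodic ρ₀ (2 * Real.pi)) (hper₁ : Periodic ρ₁ (2 * Real.pi))
    (hpos : ∀ θ, 0 < ρ₀ θ) : IsClosed (radialAnnulus ρ₀ ρ₁) := by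
  have hcompl : (radialAnnulus ρ₀ ρ₁)ᶜ = radialInterior ρ₀ ∪ radialExterior ρ₁ := by
    rw [radialAnnulus_eq_setOf hper₀ hper₁ hpos]
    ext z
    by_cases hz : z = 0
    · simp [radialInterior, hz]
    · simp [radialInterior, radialExterior, hz, imp_iff_not_or]
  rw [← isOpen_compl_iff, hcompl]
  exact (isOpen_radialInterior hc₀ hper₀ hpos).union (isOpen_radialExterior hc₁ hper₁)

theorem isPreconnected_radialAnnulus (hc₀ : Continuous ρ₀) (hc₁ : Continuous ρ₁)
    (hle : ∀ θ, ρ₀ θ ≤ ρ₁ θ) : IsPreconnected (radialAnnulus ρ₀ ρ₁) := by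
  have hseg θ : AffineMap.lineMap (ρ₀ θ) (ρ₁ θ) '' Icc (0 : ℝ) 1 = Icc (ρ₀ θ) (ρ₁ θ) := by
    rw [← segment_eq_image_lineMap, segment_eq_Icc (hle θ)]
  rw [radialAnnulus_eq_image]
  simp only [← hseg]
  exact (isPreconnected_setOf_mem_image_lineMap hc₀ hc₁ isPreconnected_Icc).image _
    continuous_ofAngleRadius.continuousOn

theorem isPreconnected_radialInterior_inter_radialExterior (hc₀ : Continuous ρ₀)
    (hc₁ : Continuous ρ₁) (hper₀ : Periodic ρ₀ (2 * Real.pi))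
    (hper₁ : Periodic ρ₁ (2 * Real.pi)) (hpos : ∀ θ, 0 < ρ₀ θ) (hlt : ∀ θ, ρ₀ θ < ρ₁ θ) :
    IsPreconnected (radialInterior ρ₁ ∩ radialExterior ρ₀) := by
  have hseg θ : AffineMap.lineMap (ρ₀ θ) (ρ₁ θ) '' Ioo (0 : ℝ) 1 = Ioo (ρ₀ θ) (ρ₁ θ) := by
    rw [← openSegment_eq_image_lineMap, openSegment_eq_Ioo (hlt θ)]
  rw [radialInterior_inter_radialExterior hper₀ hper₁ hpos]
  simp only [← hseg]
  exact (isPreconnected_setOf_mem_image_lineMap hc₀ hc₁ isPreconnected_Ioo).image _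
    continuous_ofAngleRadius.continuousOn

theorem mapsTo_radialAnnulus (hc₀ : Continuous ρ₀) (hc₁ : Continuous ρ₁)
    (hper₀ : Periodic ρ₀ (2 * Real.pi)) (hper₁ : Periodic ρ₁ (2 * Real.pi))
    (hpos : ∀ θ, 0 < ρ₀ θ) (hlt : ∀ θ, ρ₀ θ < ρ₁ θ) {f : ℂ → ℂ}
    (hf : ContinuousOn f (radialAnnulus ρ₀ ρ₁)) (hinj : InjOn f (radialAnnulus ρ₀ ρ₁))
    (hf₀ : f '' radialCurve ρ₀ = radialCurve ρ₀) (hf₁ : f '' radialCurve ρ₁ = radialCurve ρ₁) :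
    MapsTo f (radialAnnulus ρ₀ ρ₁) (radialAnnulus ρ₀ ρ₁) :=
  have hpos₁ θ : 0 < ρ₁ θ := (hpos θ).trans (hlt θ)
  mapsTo_of_injOn_of_image_eq (isOpen_radialInterior hc₁ hper₁ hpos₁)
    (isOpen_radialExterior hc₀ hper₀) (radialInterior_union_radialExterior hlt)
    (radialCurve_subset_radialInterior_diff hper₀ hpos hlt)
    (radialCurve_subset_radialExterior_diff hper₁ hpos₁ hlt) ⟨_, 0, rfl⟩ ⟨_, 0, rfl⟩
    (radialAnnulus_eq_union hper₀ hper₁ hpos hlt)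
    (isClosed_radialAnnulus hc₀ hc₁ hper₀ hper₁ hpos)
    (isPreconnected_radialInterior_inter_radialExterior hc₀ hc₁ hper₀ hper₁ hpos hlt)
    (isPreconnected_radialAnnulus hc₀ hc₁ fun θ => (hlt θ).le) hf hinj hf₀ hf₁

end Radial

theorem annulus_invariant_of_boundary_invariant_general
    (ρ₀ ρ₁ : ℝ → ℝ) (hc₀ : Continuous ρ₀) (hc₁ : Continuous ρ₁)
    (hper₀ : ∀ θ : ℝ, ρ₀ (θ + 2 * Real.pi) = ρ₀ θ)
    (hper₁ : ∀ θ : ℝ, ρ₁ (θ + 2 * Real.pi) = ρ₁ θ)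
    (hpos : ∀ θ : ℝ, 0 < ρ₀ θ) (hlt : ∀ θ : ℝ, ρ₀ θ < ρ₁ θ)
    (B : Set ℂ) (hAB : radialAnnulus ρ₀ ρ₁ ⊆ B)
    (T S : ℂ → ℂ) (hTc : ContinuousOn T B) (hSc : ContinuousOn S B)
    (hST : ∀ z ∈ B, S (T z) = z) (hTS : ∀ z ∈ B, T (S z) = z)
    (hγ₀ : T '' radialCurve ρ₀ = radialCurve ρ₀)
    (hγ₁ : T '' radialCurve ρ₁ = radialCurve ρ₁) :
    T '' radialAnnulus ρ₀ ρ₁ = radialAnnulus ρ₀ ρ₁ := by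
  have hSTA : LeftInvOn S T (radialAnnulus ρ₀ ρ₁) := fun z hz => hST z (hAB hz)
  have hTSA : LeftInvOn T S (radialAnnulus ρ₀ ρ₁) := fun z hz => hTS z (hAB hz)
  have hγ₀A : radialCurve ρ₀ ⊆ radialAnnulus ρ₀ ρ₁ := fun _ ⟨θ, hz⟩ =>
    ⟨θ, _, le_rfl, (hlt θ).le, hz⟩
  have hγ₁A : radialCurve ρ₁ ⊆ radialAnnulus ρ₀ ρ₁ := fun _ ⟨θ, hz⟩ =>
    ⟨θ, _, (hlt θ).le, le_rfl, hz⟩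
  have hSγ₀ : S '' radialCurve ρ₀ = radialCurve ρ₀ := by
    simpa only [hγ₀] using (hSTA.mono hγ₀A).image_image
  have hSγ₁ : S '' radialCurve ρ₁ = radialCurve ρ₁ := by
    simpa only [hγ₁] using (hSTA.mono hγ₁A).image_image
  have hTmaps := mapsTo_radialAnnulus hc₀ hc₁ hper₀ hper₁ hpos hlt (hTc.mono hAB) hSTA.injOn
    hγ₀ hγ₁
  have hSmaps := mapsTo_radialAnnulus hc₀ hc₁ hper₀ hper₁ hpos hlt (hSc.mono hAB) hTSA.injOn
    hSγ₀ hSγ₁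
  exact hTmaps.image_subset.antisymm (hTSA.surjOn hSmaps)

/-- Topological lemma: if a homeomorphism `T` of an open set `B` containing the annulus
`A` bounded by the closed radial curves `γ₀` and `γ₁` preserves each boundary curve,
then it preserves the annulus: `T(A) = A`. -/
theorem annulus_invariant_of_boundary_invariant
    (ρ₀ ρ₁ : ℝ → ℝ) (hc₀ : Continuous ρ₀) (hc₁ : Continuous ρ₁)
    (hper₀ : ∀ θ : ℝ, ρ₀ (θ + 2 * Real.pi) = ρ₀ θ)
    (hper₁ : ∀ θ : ℝ, ρ₁ (θ + 2 * Real.pi) = ρ₁ θ)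
    (hpos : ∀ θ : ℝ, 0 < ρ₀ θ) (hlt : ∀ θ : ℝ, ρ₀ θ < ρ₁ θ)
    (B : Set ℂ) (hBopen : IsOpen B) (hAB : radialAnnulus ρ₀ ρ₁ ⊆ B)
    (T S : ℂ → ℂ) (hTc : ContinuousOn T B) (hSc : ContinuousOn S B)
    (hTB : Set.MapsTo T B B) (hSB : Set.MapsTo S B B)
    (hST : ∀ z ∈ B, S (T z) = z) (hTS : ∀ z ∈ B, T (S z) = z)
    (hγ₀ : T '' radialCurve ρ₀ = radialCurve ρ₀)
    (hγ₁ : T '' radialCurve ρ₁ = radialCurve ρ₁) :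
    T '' radialAnnulus ρ₀ ρ₁ = radialAnnulus ρ₀ ρ₁ :=
  annulus_invariant_of_boundary_invariant_general ρ₀ ρ₁ hc₀ hc₁ hper₀ hper₁ hpos hlt B hAB T S hTc
    hSc hST hTS hγ₀ hγ₁
end
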